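/- Let $s \in (0,1)$, $\lambda > 0$, and let $\phi : (0,\infty) \to \mathbb C$ be bounded and continuously differentiable with $\phi'$ bounded. Set $F(\lambda) := \frac{\lambda^{2s}}{\Gamma(s)4^{s}}\int_0^\infty r^{-s-1} e^{-\lambda^2/(4r)}\phi(r)\,dr$. Then $F''(\lambda) + \frac{1-2s}{\lambda}F'(\lambda) = -\frac{\lambda^{2s}}{\Gamma(s)4^{s}}\int_0^\infty \phi'(r)\, e^{-\lambda^2/(4r)}r^{-s-1}\,dr$, where the key identity used is $\frac{d}{dr}\left(e^{-\lambda^2/(4r)} r^{-s-1}\right) = \left(\frac{\lambda^2}{4r^2} - \frac{s+1}{r}\right)e^{-\lambda^2/(4r)} r^{-s-1}$ together with integration by parts (the boundary terms at $0$ and $\infty$ vanish). -/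

import Mathlib

/-!
Write `F = c λ^{2s} J` with `J(λ) = ∫ r^{-s-1} e^{-λ²/(4r)} φ(r) dr`. Conjugation by `λ^{2s}` turns
`∂² + (1-2s)/λ ∂` into `∂² + (1+2s)/λ ∂`, and this operator applied to the kernel in `λ` equals
its derivative in `r`. Differentiation under the integral sign is justified because the kernel and
its `λ`-derivatives are dominated by `r^{-a} e^{-c/r}`, integrable on `(0, ∞)` for `a > 1`.
An integration by parts in `r` then moves the derivative onto `φ`; the boundary terms vanish since
`φ` is bounded and the kernel tends to `0` at both ends.
-/

open MeasureTheory Set Filter Topology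

lemma rpow_neg_mul_exp_neg_div_le {a c r : ℝ} (hc : 0 < c) (hr : 0 < r) (n : ℕ) :
    r ^ (-a) * Real.exp (-c / r) ≤ n.factorial / c ^ n * r ^ (n - a) := by
  have hexp : Real.exp (-c / r) ≤ n.factorial / c ^ n * r ^ n := by
    rw [neg_div, Real.exp_neg]
    calc (Real.exp (c / r))⁻¹ ≤ ((c / r) ^ n / n.factorial)⁻¹ :=
          inv_anti₀ (by positivity) (Real.pow_div_factorial_le_exp _ (by positivity) n)
      _ = n.factorial / c ^ n * r ^ n := by rw [div_pow]; field_simp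
  rw [sub_eq_add_neg, Real.rpow_add hr, Real.rpow_natCast]
  nlinarith [Real.rpow_nonneg hr.le (-a)]

lemma continuousOn_rpow_neg_mul_exp_neg_div (a c : ℝ) :
    ContinuousOn (fun r : ℝ => r ^ (-a) * Real.exp (-c / r)) (Ioi 0) := fun r hr => by
  have hr : r ≠ 0 := (mem_Ioi.1 hr).ne'
  exact ContinuousAt.continuousWithinAt (by fun_prop (disch := simp [hr]))

lemma integrableOn_rpow_neg_mul_exp_neg_div {a c : ℝ} (ha : 1 < a) (hc : 0 < c) :
    IntegrableOn (fun r : ℝ => r ^ (-a) * Real.exp (-c / r)) (Ioi 0) := by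
  have hcont := continuousOn_rpow_neg_mul_exp_neg_div a c
  rw [← Ioc_union_Ioi_eq_Ioi zero_le_one]
  refine IntegrableOn.union ?_ ?_
  · obtain ⟨n, hn⟩ := exists_nat_ge a
    refine Integrable.mono'
      (integrableOn_const (C := (n.factorial / c ^ n : ℝ)) measure_Ioc_lt_top.ne)
      ((hcont.mono Ioc_subset_Ioi_self).aestronglyMeasurable measurableSet_Ioc) ?_
    filter_upwards [ae_restrict_mem measurableSet_Ioc] with r ⟨hr0, hr1⟩
    rw [Real.norm_of_nonneg (by positivity)]
    calc r ^ (-a) * Real.exp (-c / r) ≤ n.factorial / c ^ n * r ^ (n - a) :=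
          rpow_neg_mul_exp_neg_div_le hc hr0 n
      _ ≤ n.factorial / c ^ n * 1 := by
          gcongr; exact Real.rpow_le_one hr0.le hr1 (by linarith)
      _ = n.factorial / c ^ n := mul_one _
  · refine Integrable.mono' (integrableOn_Ioi_rpow_of_lt (by linarith : -a < -1) one_pos)
      ((hcont.mono (Ioi_subset_Ioi zero_le_one)).aestronglyMeasurable measurableSet_Ioi) ?_
    filter_upwards [ae_restrict_mem measurableSet_Ioi] with r (hr : 1 < r)
    rw [Real.norm_of_nonneg (by positivity)]
    exact mul_le_of_le_one_right (by positivity)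
      (Real.exp_le_one_iff.2 (div_nonpos_of_nonpos_of_nonneg (by linarith) (by linarith)))

lemma tendsto_rpow_neg_mul_exp_neg_div_nhdsGT_zero (a : ℝ) {c : ℝ} (hc : 0 < c) :
    Tendsto (fun r : ℝ => r ^ (-a) * Real.exp (-c / r)) (𝓝[>] 0) (𝓝 0) := by
  obtain ⟨n, hn⟩ := exists_nat_gt a
  have hpow : Tendsto (fun r : ℝ => n.factorial / c ^ n * r ^ (n - a)) (𝓝[>] 0) (𝓝 0) := by
    have := ((Real.continuousAt_rpow_const 0 (n - a) (Or.inr (by linarith))).tendsto.mono_left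
      (nhdsWithin_le_nhds (s := Ioi 0))).const_mul (n.factorial / c ^ n)
    rwa [Real.zero_rpow (by linarith), mul_zero] at this
  refine squeeze_zero' ?_ ?_ hpow
  all_goals filter_upwards [self_mem_nhdsWithin] with r (hr : 0 < r)
  · positivity
  · exact rpow_neg_mul_exp_neg_div_le hc hr n

lemma tendsto_rpow_neg_mul_exp_neg_div_atTop {a : ℝ} (ha : 0 < a) {c : ℝ} (hc : 0 ≤ c) :
    Tendsto (fun r : ℝ => r ^ (-a) * Real.exp (-c / r)) atTop (𝓝 0) := by
  refine squeeze_zero' ?_ ?_ (tendsto_rpow_neg_atTop ha)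
  all_goals filter_upwards [eventually_gt_atTop 0] with r hr
  · positivity
  · exact mul_le_of_le_one_right (by positivity)
      (Real.exp_le_one_iff.2 (div_nonpos_of_nonpos_of_nonneg (by linarith) hr.le))

noncomputable section

/-- For `a = s + 1` this is the paper's kernel `r^{-s-1} e^{-λ²/(4r)}` with `x = λ`; each
derivative in `λ` raises `a` by one, which is why the exponent is a parameter. -/
def extensionKernel (a x r : ℝ) : ℝ := r ^ (-a) * Real.exp (-(x ^ 2) / (4 * r))

def extensionIntegral (a : ℝ) (φ : ℝ → ℂ) (x : ℝ) : ℂ :=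
  ∫ r in Ioi 0, (extensionKernel a x r : ℂ) * φ r

end

section extensionKernel

lemma extensionKernel_eq (a x : ℝ) :
    extensionKernel a x = fun r => r ^ (-a) * Real.exp (-(x ^ 2 / 4) / r) := by
  ext r
  rw [extensionKernel, neg_div, neg_div, div_div, mul_comm 4 r]

lemma extensionKernel_pos (a x : ℝ) {r : ℝ} (hr : 0 < r) : 0 < extensionKernel a x r := by
  unfold extensionKernel; positivity

lemma extensionKernel_add_one (a x : ℝ) {r : ℝ} (hr : 0 < r) :
    extensionKernel (a + 1) x r = extensionKernel a x r / r := by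
  rw [extensionKernel, extensionKernel, neg_add, Real.rpow_add hr, Real.rpow_neg_one]
  ring

lemma extensionKernel_le_of_abs_le {a x y r : ℝ} (hr : 0 < r) (hxy : |y| ≤ |x|) :
    extensionKernel a x r ≤ extensionKernel a y r := by
  unfold extensionKernel
  have : y ^ 2 ≤ x ^ 2 := sq_le_sq.2 hxy
  gcongr

lemma continuousOn_extensionKernel (a x : ℝ) : ContinuousOn (extensionKernel a x) (Ioi 0) := by
  rw [extensionKernel_eq]
  exact continuousOn_rpow_neg_mul_exp_neg_div a (x ^ 2 / 4)

lemma integrableOn_extensionKernel {a x : ℝ} (ha : 1 < a) (hx : x ≠ 0) :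
    IntegrableOn (extensionKernel a x) (Ioi 0) := by
  rw [extensionKernel_eq]
  exact integrableOn_rpow_neg_mul_exp_neg_div ha (by positivity)

lemma tendsto_extensionKernel_nhdsGT_zero (a : ℝ) {x : ℝ} (hx : x ≠ 0) :
    Tendsto (extensionKernel a x) (𝓝[>] 0) (𝓝 0) := by
  rw [extensionKernel_eq]
  exact tendsto_rpow_neg_mul_exp_neg_div_nhdsGT_zero a (by positivity)

lemma tendsto_extensionKernel_atTop {a : ℝ} (ha : 0 < a) (x : ℝ) :
    Tendsto (extensionKernel a x) atTop (𝓝 0) := by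
  rw [extensionKernel_eq]
  exact tendsto_rpow_neg_mul_exp_neg_div_atTop ha (by positivity)

lemma hasDerivAt_extensionKernel_param (a : ℝ) {r : ℝ} (hr : 0 < r) (x : ℝ) :
    HasDerivAt (fun x => extensionKernel a x r) (-(x / 2) * extensionKernel (a + 1) x r) x := by
  have h : HasDerivAt (fun x => -(x ^ 2) / (4 * r)) (-(2 * x) / (4 * r)) x := by
    simpa using (hasDerivAt_pow 2 x).neg.div_const (4 * r)
  refine (h.exp.const_mul (r ^ (-a))).congr_deriv ?_
  rw [extensionKernel_add_one a x hr, extensionKernel]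
  field_simp
  ring

lemma hasDerivAt_extensionKernel (a x : ℝ) {r : ℝ} (hr : 0 < r) :
    HasDerivAt (extensionKernel a x) ((x ^ 2 / (4 * r ^ 2) - a / r) * extensionKernel a x r) r := by
  have hexp : HasDerivAt (fun ρ => -(x ^ 2 / 4) * ρ⁻¹) (x ^ 2 / (4 * r ^ 2)) r := by
    refine ((hasDerivAt_inv hr.ne').const_mul _).congr_deriv ?_
    field_simp
  have hK : extensionKernel a x = fun ρ => ρ ^ (-a) * Real.exp (-(x ^ 2 / 4) * ρ⁻¹) := by
    simp only [extensionKernel_eq, div_eq_mul_inv]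
  rw [hK]
  refine ((Real.hasDerivAt_rpow_const (p := -a) (Or.inl hr.ne')).mul hexp.exp).congr_deriv ?_
  rw [Real.rpow_sub_one hr.ne']
  field_simp
  ring

end extensionKernel

section extensionIntegral

variable {φ : ℝ → ℂ} {M : ℝ}

lemma aestronglyMeasurable_extensionKernel_mul (a x : ℝ)
    (hφm : AEStronglyMeasurable φ (volume.restrict (Ioi 0))) :
    AEStronglyMeasurable (fun r => (extensionKernel a x r : ℂ) * φ r) (volume.restrict (Ioi 0)) :=
  ((Complex.continuous_ofReal.comp_continuousOn
    (continuousOn_extensionKernel a x)).aestronglyMeasurable measurableSet_Ioi).mul hφm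

lemma integrableOn_extensionKernel_mul {a x : ℝ} (ha : 1 < a) (hx : x ≠ 0)
    (hφ : ∀ r, 0 < r → ‖φ r‖ ≤ M) (hφm : AEStronglyMeasurable φ (volume.restrict (Ioi 0))) :
    IntegrableOn (fun r => (extensionKernel a x r : ℂ) * φ r) (Ioi 0) :=
  (integrableOn_extensionKernel ha hx).ofReal.mul_bdd hφm
    (by filter_upwards [ae_restrict_mem measurableSet_Ioi] with r hr using hφ r hr)

lemma hasDerivAt_extensionIntegral {a l : ℝ} (ha : 1 < a) (hl : 0 < l)
    (hφ : ∀ r, 0 < r → ‖φ r‖ ≤ M) (hφm : AEStronglyMeasurable φ (volume.restrict (Ioi 0))) :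
    HasDerivAt (extensionIntegral a φ) (-(l / 2) * extensionIntegral (a + 1) φ l) l := by
  have key := hasDerivAt_integral_of_dominated_loc_of_deriv_le (μ := volume.restrict (Ioi 0))
    (F := fun x r => (extensionKernel a x r : ℂ) * φ r)
    (F' := fun x r => -((x : ℂ) / 2) * ((extensionKernel (a + 1) x r : ℂ) * φ r))
    (bound := fun r => l * (extensionKernel (a + 1) (l / 2) r * M))
    (Ioo_mem_nhds (half_lt_self hl) (lt_two_mul_self hl))
    (.of_forall fun x => aestronglyMeasurable_extensionKernel_mul a x hφm)
    (integrableOn_extensionKernel_mul ha hl.ne' hφ hφm)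
    ((aestronglyMeasurable_extensionKernel_mul (a + 1) l hφm).const_mul _) ?_
    (((integrableOn_extensionKernel (by linarith) (by positivity)).mul_const M).const_mul l) ?_
  · rw [extensionIntegral, ← integral_const_mul]
    exact key.2
  · filter_upwards [ae_restrict_mem measurableSet_Ioi] with r (hr : 0 < r)
    rintro x ⟨hx1, hx2⟩
    have hx0 : 0 < x := (half_pos hl).trans hx1
    rw [norm_mul, norm_mul, Complex.norm_real, norm_neg, norm_div, Complex.norm_real,
      Real.norm_of_nonneg hx0.le, Real.norm_of_nonneg (extensionKernel_pos _ _ hr).le,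
      RCLike.norm_ofNat]
    have hK := extensionKernel_le_of_abs_le (a := a + 1) hr
      (show |l / 2| ≤ |x| by rw [abs_of_pos hx0, abs_of_pos (half_pos hl)]; exact hx1.le)
    exact mul_le_mul (by linarith)
      (mul_le_mul hK (hφ r hr) (norm_nonneg _) (extensionKernel_pos _ _ hr).le)
      (mul_nonneg (extensionKernel_pos _ _ hr).le (norm_nonneg _)) hl.le
  · filter_upwards [ae_restrict_mem measurableSet_Ioi] with r (hr : 0 < r)
    intro x _
    refine ((hasDerivAt_extensionKernel_param a hr x).ofReal_comp.mul_const (φ r)).congr_deriv ?_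
    push_cast
    ring

lemma tendsto_extensionKernel_mul_of_bounded {a x : ℝ} {l : Filter ℝ}
    (hK : Tendsto (extensionKernel a x) l (𝓝 0)) (hl : ∀ᶠ r in l, 0 < r)
    (hφ : ∀ r, 0 < r → ‖φ r‖ ≤ M) :
    Tendsto (fun r => (extensionKernel a x r : ℂ) * φ r) l (𝓝 0) := by
  refine squeeze_zero_norm' ?_ (by simpa using hK.const_mul M)
  filter_upwards [hl] with r hr
  rw [norm_mul, Complex.norm_real, Real.norm_of_nonneg (extensionKernel_pos a x hr).le, mul_comm]
  exact mul_le_mul_of_nonneg_right (hφ r hr) (extensionKernel_pos a x hr).le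

lemma extensionIntegral_by_parts {a x : ℝ} (ha : 1 < a) (hx : x ≠ 0) {φ' : ℝ → ℂ} {M' : ℝ}
    (hφ : ∀ r, 0 < r → ‖φ r‖ ≤ M) (hφ' : ∀ r, 0 < r → ‖φ' r‖ ≤ M')
    (hφd : ∀ r, 0 < r → HasDerivAt φ (φ' r) r)
    (hφ'm : AEStronglyMeasurable φ' (volume.restrict (Ioi 0))) :
    x ^ 2 / 4 * extensionIntegral (a + 1 + 1) φ x - a * extensionIntegral (a + 1) φ x
      = -extensionIntegral a φ' x := by
  have hφm : AEStronglyMeasurable φ (volume.restrict (Ioi 0)) :=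
    ContinuousOn.aestronglyMeasurable (fun r hr => (hφd r hr).continuousAt.continuousWithinAt)
      measurableSet_Ioi
  have hint : ∀ b, 1 < b → IntegrableOn (fun r => (extensionKernel b x r : ℂ) * φ r) (Ioi 0) :=
    fun b hb => integrableOn_extensionKernel_mul hb hx hφ hφm
  have hu' : EqOn (fun r => (((x ^ 2 / (4 * r ^ 2) - a / r) * extensionKernel a x r : ℝ) : ℂ) * φ r)
      (fun r => x ^ 2 / 4 *
      ((extensionKernel (a + 1 + 1) x r : ℂ) * φ r) - a * ((extensionKernel (a + 1) x r : ℂ) * φ r))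
      (Ioi 0) := by
    intro r (hr : 0 < r)
    simp only [extensionKernel_add_one _ _ hr]
    push_cast
    field_simp
  have hu'_int := (integrableOn_congr_fun hu' measurableSet_Ioi).2
      (((hint _ (by linarith)).const_mul _).sub ((hint _ (by linarith)).const_mul _))
  have hparts := integral_Ioi_mul_deriv_eq_deriv_mul
    (fun r hr => (hasDerivAt_extensionKernel a x hr).ofReal_comp) hφd
    (integrableOn_extensionKernel_mul ha hx hφ' hφ'm) hu'_int
    (tendsto_extensionKernel_mul_of_bounded (tendsto_extensionKernel_nhdsGT_zero a hx)
      self_mem_nhdsWithin hφ)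
    (tendsto_extensionKernel_mul_of_bounded (tendsto_extensionKernel_atTop (by linarith) x)
      (eventually_gt_atTop 0) hφ)
  rw [extensionIntegral, extensionIntegral, extensionIntegral, hparts, sub_self, zero_sub, neg_neg,
    setIntegral_congr_fun measurableSet_Ioi hu', integral_sub ((hint _ (by linarith)).const_mul _)
      ((hint _ (by linarith)).const_mul _), integral_const_mul, integral_const_mul]

end extensionIntegral

lemma hasDerivAt_rpow_div_const {x : ℝ} (hx : 0 < x) (t c : ℝ) :
    HasDerivAt (fun y : ℝ => y ^ t / c) (t / x * (x ^ t / c)) x := by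
  refine ((Real.hasDerivAt_rpow_const (Or.inl hx.ne')).div_const c).congr_deriv ?_
  rw [Real.rpow_sub_one hx.ne']
  ring

lemma deriv_deriv_add_mul_deriv_of_eq_rpow_mul {s c l : ℝ} (hl : 0 < l) {F J J' : ℝ → ℂ}
    {J'' : ℂ} (hF : ∀ x, 0 < x → F x = ((x ^ (2 * s) / c : ℝ) : ℂ) * J x)
    (hJ : ∀ x, 0 < x → HasDerivAt J (J' x) x) (hJ' : HasDerivAt J' J'' l) :
    deriv (deriv F) l + (((1 - 2 * s) / l : ℝ) : ℂ) * deriv F l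
      = ((l ^ (2 * s) / c : ℝ) : ℂ) * (J'' + (((1 + 2 * s) / l : ℝ) : ℂ) * J' l) := by
  set p : ℝ → ℝ := fun x => x ^ (2 * s) / c
  set F' : ℝ → ℂ := fun x => ((2 * s / x * p x : ℝ) : ℂ) * J x + (p x : ℂ) * J' x
  have hF' : ∀ x, 0 < x → HasDerivAt F (F' x) x := fun x hx =>
    ((hasDerivAt_rpow_div_const hx _ c).ofReal_comp.mul (hJ x hx)).congr_of_eventuallyEq
      (eventually_of_mem (Ioi_mem_nhds hx) hF)
  have hq : HasDerivAt (fun x => 2 * s / x * p x)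
      (2 * s * -(l ^ 2)⁻¹ * p l + 2 * s * l⁻¹ * (2 * s / l * p l)) l :=
    ((hasDerivAt_inv hl.ne').const_mul (2 * s)).mul (hasDerivAt_rpow_div_const hl _ c)
  have hF'' : HasDerivAt F' _ l := (hq.ofReal_comp.mul (hJ l hl)).add
    ((hasDerivAt_rpow_div_const hl (2 * s) c).ofReal_comp.mul hJ')
  have hderiv : deriv F =ᶠ[𝓝 l] F' :=
    eventually_of_mem (Ioi_mem_nhds hl) fun x hx => (hF' x hx).deriv
  rw [hderiv.deriv_eq, hF''.deriv, (hF' l hl).deriv]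
  have hl' : (l : ℂ) ≠ 0 := Complex.ofReal_ne_zero.2 hl.ne'
  simp only [F', p]
  push_cast
  field_simp
  ring

lemma deriv_deriv_add_mul_deriv_of_eq_extensionIntegral {s c l : ℝ} (hs : 0 < s) (hl : 0 < l)
    {φ φ' F : ℝ → ℂ} {M M' : ℝ} (hφ : ∀ r, 0 < r → ‖φ r‖ ≤ M) (hφ' : ∀ r, 0 < r → ‖φ' r‖ ≤ M')
    (hφd : ∀ r, 0 < r → HasDerivAt φ (φ' r) r)
    (hφ'm : AEStronglyMeasurable φ' (volume.restrict (Ioi 0)))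
    (hF : ∀ x, 0 < x → F x = ((x ^ (2 * s) / c : ℝ) : ℂ) * extensionIntegral (s + 1) φ x) :
    deriv (deriv F) l + (((1 - 2 * s) / l : ℝ) : ℂ) * deriv F l
      = -((l ^ (2 * s) / c : ℝ) : ℂ) * extensionIntegral (s + 1) φ' l := by
  have hφm : AEStronglyMeasurable φ (volume.restrict (Ioi 0)) :=
    ContinuousOn.aestronglyMeasurable (fun r hr => (hφd r hr).continuousAt.continuousWithinAt)
      measurableSet_Ioi
  have hJ' : HasDerivAt (fun x : ℝ => -((x : ℂ) / 2) * extensionIntegral (s + 1 + 1) φ x)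
      ((l : ℂ) ^ 2 / 4 * extensionIntegral (s + 1 + 1 + 1) φ l
        - 1 / 2 * extensionIntegral (s + 1 + 1) φ l) l := by
    refine (((hasDerivAt_id l).ofReal_comp.div_const 2).neg.mul
      (hasDerivAt_extensionIntegral (by linarith) hl hφ hφm)).congr_deriv ?_
    simp only [Pi.neg_apply, id, Complex.ofReal_one]
    ring
  -- `J'' + (1+2s)/λ J' = (λ²/4) J_{s+3} - (s+1) J_{s+2}` is the integral of `∂ᵣK · φ`.
  rw [deriv_deriv_add_mul_deriv_of_eq_rpow_mul hl hF
      (fun x hx => hasDerivAt_extensionIntegral (by linarith) hx hφ hφm) hJ',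
    ← neg_neg (extensionIntegral (s + 1) φ' l),
    ← extensionIntegral_by_parts (by linarith) hl.ne' hφ hφ' hφd hφ'm, neg_mul_neg]
  congr 1
  have hl' : (l : ℂ) ≠ 0 := Complex.ofReal_ne_zero.2 hl.ne'
  push_cast
  field_simp
  ring

/-- The extension kernel integral `F(λ) = λ^{2s}/(Γ(s)4^s) ∫_0^∞ r^{-s-1}
e^{-λ²/(4r)} φ(r) dr` of a bounded `C¹` function `φ` with bounded derivative satisfies the
degenerate ODE `F'' + (1-2s)/λ F' = -λ^{2s}/(Γ(s)4^s) ∫_0^∞ φ'(r) e^{-λ²/(4r)} r^{-s-1} dr`;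
the key identity is `d/dr (e^{-λ²/(4r)} r^{-s-1}) = (λ²/(4r²) - (s+1)/r) e^{-λ²/(4r)} r^{-s-1}`. -/
theorem stmt_13 (s : ℝ) (hs : s ∈ Set.Ioo (0:ℝ) 1)
    (φ φ' : ℝ → ℂ) (M : ℝ)
    (hφ : ∀ r : ℝ, 0 < r → ‖φ r‖ ≤ M) (hφ' : ∀ r : ℝ, 0 < r → ‖φ' r‖ ≤ M)
    (hφd : ∀ r : ℝ, 0 < r → HasDerivAt φ (φ' r) r)
    (hφ'c : ContinuousOn φ' (Set.Ioi 0))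
    (F : ℝ → ℂ)
    (hF : ∀ l : ℝ, 0 < l →
      F l = ((l ^ (2 * s) / (Real.Gamma s * 4 ^ s) : ℝ) : ℂ) *
        ∫ r in Set.Ioi (0:ℝ), ((r ^ (-s - 1) * Real.exp (-(l ^ 2) / (4 * r)) : ℝ) : ℂ) * φ r) :
    (∀ l : ℝ, 0 < l →
      deriv (deriv F) l + (((1 - 2 * s) / l : ℝ) : ℂ) * deriv F l
        = -((l ^ (2 * s) / (Real.Gamma s * 4 ^ s) : ℝ) : ℂ) *
            ∫ r in Set.Ioi (0:ℝ),
              φ' r * ((Real.exp (-(l ^ 2) / (4 * r)) * r ^ (-s - 1) : ℝ) : ℂ)) ∧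
    (∀ l r : ℝ, 0 < l → 0 < r →
      HasDerivAt (fun ρ : ℝ => Real.exp (-(l ^ 2) / (4 * ρ)) * ρ ^ (-s - 1))
        ((l ^ 2 / (4 * r ^ 2) - (s + 1) / r) * (Real.exp (-(l ^ 2) / (4 * r)) * r ^ (-s - 1)))
        r) := by
  have hK : ∀ x,
      extensionKernel (s + 1) x = fun r => Real.exp (-(x ^ 2) / (4 * r)) * r ^ (-s - 1) :=
    fun x => funext fun r => by rw [extensionKernel, neg_add', mul_comm]
  refine ⟨fun l hl => ?_, fun l r _ hr => by
    simpa only [hK] using hasDerivAt_extensionKernel (s + 1) l hr⟩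
  have hFJ : ∀ x, 0 < x →
      F x = ((x ^ (2 * s) / (Real.Gamma s * 4 ^ s) : ℝ) : ℂ) * extensionIntegral (s + 1) φ x := by
    intro x hx
    simp only [hF x hx, extensionIntegral, hK, mul_comm (Real.exp _)]
  have hφ'K : ∫ r in Ioi 0, φ' r * ((Real.exp (-(l ^ 2) / (4 * r)) * r ^ (-s - 1) : ℝ) : ℂ)
      = extensionIntegral (s + 1) φ' l := by
    simp only [extensionIntegral, hK, mul_comm (φ' _)]
  rw [hφ'K]
  exact deriv_deriv_add_mul_deriv_of_eq_extensionIntegral hs.1 hl hφ hφ' hφd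
    (hφ'c.aestronglyMeasurable measurableSet_Ioi) hFJ
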